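/- For a marked graph G with a vertex v that is unlooped and marked c (or looped and marked cr), the bracket satisfies [G] = A[G − v] + B[G_cru^v − v]. If instead v is looped and marked c (or unlooped and marked cr), then [G] = B[G − v] + A[G_cru^v − v]. -/

import Mathlib

/-- The six vertex marks of a multiply marked graph. -/
inductive Mark : Type
  | un | r | c | cr | u | ur
deriving DecidableEq

/-- A (multiply marked) graph: symmetric irreflexive adjacency, loops,
marks, and a number of free loops. -/
structure MGraph (V : Type) [DecidableEq V] : Type where
  adj : V → V → Bool
  adj_symm : ∀ x y, adj x y = adj y x
  adj_irrefl : ∀ x, adj x x = false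
  loop : V → Bool
  mark : V → Mark
  freeLoops : ℕ

namespace MGraph

variable {V : Type} [DecidableEq V]

/-- The mark change at `v` itself: unmarked↔u, r↔ur, c↔cr. -/
def flipV : Mark → Mark
  | .un => .u | .u => .un | .r => .ur | .ur => .r | .c => .cr | .cr => .c

/-- The mark change at neighbors of `v`: unmarked↔r, c↔ur, u↔cr. -/
def flipN : Mark → Mark
  | .un => .r | .r => .un | .c => .ur | .ur => .c | .u => .cr | .cr => .u

/-- The marked local complement `G_cru^v`. -/
def mlc (G : MGraph V) (v : V) : MGraph V where
  adj x y := if x ≠ y ∧ G.adj v x = true ∧ G.adj v y = true then !(G.adj x y) else G.adj x y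
  adj_symm := by
    intro x y
    try dsimp only
    by_cases h : x ≠ y ∧ G.adj v x = true ∧ G.adj v y = true
    · rw [if_pos h, if_pos ⟨h.1.symm, h.2.2, h.2.1⟩, G.adj_symm]
    · rw [if_neg h, if_neg (fun h' => h ⟨h'.1.symm, h'.2.2, h'.2.1⟩), G.adj_symm]
  adj_irrefl := by
    intro x
    try dsimp only
    rw [if_neg (fun h => h.1 rfl), G.adj_irrefl]
  loop := G.loop
  mark x := if x = v then flipV (G.mark x)
            else if G.adj v x = true then flipN (G.mark x) else G.mark x
  freeLoops := G.freeLoops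

end MGraph

/-- Whether a mark contains the letter `r`. -/
def Mark.hasR : Mark → Bool
  | .r => true | .cr => true | .ur => true | _ => false

/-- Whether a mark is `c` or `cr`. -/
def Mark.isC : Mark → Bool
  | .c => true | .cr => true | _ => false

/-- Whether a mark is `u` or `ur`. -/
def Mark.isU : Mark → Bool
  | .u => true | .ur => true | _ => false

/-- GF(2)-nullity of a square matrix. -/
noncomputable def nullity {n : Type} [Fintype n] (M : Matrix n n (ZMod 2)) : ℕ :=
  Fintype.card n - M.rank

namespace MGraph

variable {V : Type} [DecidableEq V]

/-- The matrix `𝒜(G) + Δ_T` over GF(2): off-diagonal entries record adjacency,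
and the diagonal entry at `x` is the loop contribution plus the `Δ_T` entry,
which is `1` iff (`x ∈ T` and the mark of `x` has no `r`) or (`x ∉ T` and it has an `r`). -/
def matT (G : MGraph V) (T : Finset V) : Matrix V V (ZMod 2) :=
  Matrix.of fun x y =>
    if x = y then
      (if G.loop x = true then 1 else 0) +
        (if ((x ∈ T) ↔ (G.mark x).hasR = false) then 1 else 0)
    else if G.adj x y = true then 1 else 0

/-- The vertices whose rows and columns are kept in `𝒜(G)_T`: delete `x` iff
`x` is marked `c`/`cr` with diagonal entry `0`, or marked `u`/`ur` with diagonal entry `1`. -/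
def keep (G : MGraph V) (T : Finset V) (x : V) : Bool :=
  !(((G.mark x).isC && decide (G.matT T x x = 0)) ||
    ((G.mark x).isU && decide (G.matT T x x = 1)))

/-- The matrix `𝒜(G)_T`, the submatrix of `𝒜(G) + Δ_T` on the kept vertices. -/
def subMat (G : MGraph V) (T : Finset V) :
    Matrix {x : V // G.keep T x = true} {x : V // G.keep T x = true} (ZMod 2) :=
  (G.matT T).submatrix Subtype.val Subtype.val

/-- The marked-graph bracket polynomial, evaluated at elements `A`, `B`, `d`
of a commutative ring. -/
noncomputable def bracket (G : MGraph V) [Fintype V] {R : Type*} [CommRing R]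
    (A B d : R) : R :=
  d ^ G.freeLoops *
    ∑ T : Finset V, A ^ (Fintype.card V - T.card) * B ^ T.card * d ^ nullity (G.subMat T)

/-- The weighted marked-graph bracket polynomial with vertex weights `α`, `β`. -/
noncomputable def wbracket (G : MGraph V) [Fintype V] {R : Type*} [CommRing R]
    (d : R) (α β : V → R) : R :=
  d ^ G.freeLoops *
    ∑ T : Finset V, (∏ x ∈ Tᶜ, α x) * (∏ x ∈ T, β x) * d ^ nullity (G.subMat T)

/-- Deletion of the vertex `v`. -/
def delete (G : MGraph V) (v : V) : MGraph {x : V // x ≠ v} where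
  adj x y := G.adj x.val y.val
  adj_symm := fun x y => G.adj_symm x.val y.val
  adj_irrefl := fun x => G.adj_irrefl x.val
  loop x := G.loop x.val
  mark x := G.mark x.val
  freeLoops := G.freeLoops

/-- Change the mark of the vertex `v` to `m`. -/
def setMark (G : MGraph V) (v : V) (m : Mark) : MGraph V :=
  { G with mark := fun x => if x = v then m else G.mark x }

/-- The one-vertex graph with given loop status and mark (and no free loops). -/
def single (l : Bool) (m : Mark) : MGraph Unit where
  adj _ _ := false
  adj_symm := fun _ _ => rfl
  adj_irrefl := fun _ => rfl
  loop _ := l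
  mark _ := m
  freeLoops := 0

end MGraph

/-!
Split the state sum according to whether `v ∈ T`. As `v` is marked `c`/`cr`, its row and column
are deleted from `𝒜(G)_T` exactly when its diagonal entry is `0`, and what remains is
`𝒜(G − v)_{T − v}`. When the entry is `1`, pivoting on it (a Schur complement, which preserves
the GF(2) nullity) toggles the adjacencies among the neighbours of `v` together with their
diagonal entries, giving `𝒜(G_cru^v − v)_{T − v}`. The diagonal entry of `v` is `[v ∈ T]` when
the loop status of `v` agrees with whether its mark contains `r`, and `[v ∉ T]` otherwise.
-/

namespace Matrix

variable {n R : Type*} [DecidableEq n] [CommRing R]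

def schurComplementAt (M : Matrix n n R) (v : n) : Matrix {x // x ≠ v} {x // x ≠ v} R :=
  of fun x y => M x y - M x v * M v y

variable [Fintype n]

theorem mulVec_apply_eq_add_sum_ne (M : Matrix n n R) (x : n → R) (i v : n) :
    (M *ᵥ x) i = M i v * x v + ∑ j : {j // j ≠ v}, M i j * x j :=
  Fintype.sum_eq_add_sum_subtype_ne _ v

variable {M : Matrix n n R} {v : n}

theorem schurComplementAt_mulVec (hv : M v v = 1) (x : n → R) (i : {x // x ≠ v}) :
    (M.schurComplementAt v *ᵥ fun j => x j) i = (M *ᵥ x) i - M i v * (M *ᵥ x) v := by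
  rw [mulVec_apply_eq_add_sum_ne M x i v, mulVec_apply_eq_add_sum_ne M x v v, hv, one_mul,
    mul_add, Finset.mul_sum, add_sub_add_left_eq_sub, ← Finset.sum_sub_distrib]
  refine Finset.sum_congr rfl fun j _ => ?_
  simp only [schurComplementAt, of_apply]
  ring

/-- Restriction to the coordinates `≠ v` maps `ker M` isomorphically onto the kernel of the
Schur complement: row `v` of `M x = 0` recovers `x v`. -/
theorem finrank_ker_schurComplementAt (hv : M v v = 1) :
    Module.finrank R (LinearMap.ker (M.schurComplementAt v).mulVecLin) =
      Module.finrank R (LinearMap.ker M.mulVecLin) := by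
  have restrict_mem : ∀ x ∈ LinearMap.ker M.mulVecLin,
      (fun j : {j // j ≠ v} => x j) ∈ LinearMap.ker (M.schurComplementAt v).mulVecLin := by
    intro x hx
    rw [LinearMap.mem_ker, mulVecLin_apply] at hx ⊢
    funext i
    rw [schurComplementAt_mulVec hv, hx]
    simp
  let f : LinearMap.ker M.mulVecLin →ₗ[R] LinearMap.ker (M.schurComplementAt v).mulVecLin :=
    (LinearMap.funLeft R R Subtype.val ∘ₗ (LinearMap.ker M.mulVecLin).subtype).codRestrict _
      fun x => restrict_mem x x.2
  have hf : Function.Bijective f := by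
    refine ⟨(injective_iff_map_eq_zero f).2 fun ⟨x, hx⟩ h0 => ?_, fun ⟨y, hy⟩ => ?_⟩
    · have hres : ∀ j : {j // j ≠ v}, x j = 0 := fun j => congrFun (congrArg Subtype.val h0) j
      have hxv : x v = 0 := by
        simpa [mulVec_apply_eq_add_sum_ne M x v v, hv, hres] using
          congrFun (LinearMap.mem_ker.1 hx) v
      ext i
      by_cases hi : i = v
      · subst hi; exact hxv
      · exact hres ⟨i, hi⟩
    · let x : n → R := fun i => if h : i = v then -∑ j : {j // j ≠ v}, M v j * y j else y ⟨i, h⟩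
      have hxj : ∀ j : {j // j ≠ v}, x j = y j := fun j => dif_neg j.2
      have hxv : (M *ᵥ x) v = 0 := by
        rw [mulVec_apply_eq_add_sum_ne M x v v, hv, one_mul, show x v = _ from dif_pos rfl]
        simp only [hxj, neg_add_cancel]
      refine ⟨⟨x, LinearMap.mem_ker.2 (funext fun i => ?_)⟩, Subtype.ext (funext hxj)⟩
      by_cases hi : i = v
      · subst hi; exact hxv
      · have := congrFun (LinearMap.mem_ker.1 hy) ⟨i, hi⟩
        rw [mulVecLin_apply, ← funext hxj, schurComplementAt_mulVec hv, hxv] at this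
        simpa using this
  exact (LinearEquiv.ofBijective f hf).finrank_eq.symm

end Matrix

theorem nullity_eq_finrank_ker {n : Type} [Fintype n] [DecidableEq n] (M : Matrix n n (ZMod 2)) :
    nullity M = Module.finrank (ZMod 2) (LinearMap.ker M.mulVecLin) := by
  have h := LinearMap.finrank_range_add_finrank_ker M.mulVecLin
  rw [Module.finrank_pi] at h
  unfold nullity Matrix.rank
  omega

theorem nullity_eq_of_equiv {ι κ : Type} [Fintype ι] [Fintype κ] {N₁ : Matrix ι ι (ZMod 2)}
    {N₂ : Matrix κ κ (ZMod 2)} (e : ι ≃ κ) (h : ∀ i j, N₁ i j = N₂ (e i) (e j)) :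
    nullity N₁ = nullity N₂ := by
  rw [show N₁ = N₂.submatrix e e from Matrix.ext h, nullity, nullity, Matrix.rank_submatrix,
    Fintype.card_congr e]

theorem nullity_schurComplementAt {n : Type} [Fintype n] [DecidableEq n]
    {M : Matrix n n (ZMod 2)} {v : n} (hv : M v v = 1) :
    nullity (M.schurComplementAt v) = nullity M := by
  rw [nullity_eq_finrank_ker, nullity_eq_finrank_ker, Matrix.finrank_ker_schurComplementAt hv]

namespace Finset

variable {V M : Type*} [Fintype V] [DecidableEq V] [AddCommMonoid M]

theorem sum_filter_mem_eq_sum_subtype_ne (v : V) {F : Finset V → M}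
    {F' : Finset {x // x ≠ v} → M} (h : ∀ T, v ∈ T → F T = F' (T.subtype (· ≠ v))) :
    ∑ T with v ∈ T, F T = ∑ T', F' T' := by
  refine sum_bij' (fun T _ => T.subtype (· ≠ v)) (fun T' _ => insert v (T'.map (.subtype _)))
    (fun _ _ => mem_univ _) (fun _ _ => by simp) (fun T hT => ?_) (fun T' _ => ?_)
    (fun T hT => h T (by simpa using hT))
  · rw [subtype_map, filter_ne', insert_erase (by simpa using hT)]
  · ext ⟨a, ha⟩
    simp [ha]

theorem sum_filter_notMem_eq_sum_subtype_ne (v : V) {F : Finset V → M}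
    {F' : Finset {x // x ≠ v} → M} (h : ∀ T, v ∉ T → F T = F' (T.subtype (· ≠ v))) :
    ∑ T with v ∉ T, F T = ∑ T', F' T' := by
  refine sum_bij' (fun T _ => T.subtype (· ≠ v)) (fun T' _ => T'.map (.subtype _))
    (fun _ _ => mem_univ _) (fun _ _ => by simp) (fun T hT => ?_) (fun T' _ => ?_)
    (fun T hT => h T (by simpa using hT))
  · rw [subtype_map, filter_ne', erase_eq_of_notMem (by simpa using hT)]
  · ext ⟨a, ha⟩
    simp [ha]

end Finset

theorem Mark.hasR_flipN (m : Mark) : (MGraph.flipN m).hasR = !m.hasR := by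
  cases m <;> rfl

namespace MGraph

section

variable {V : Type} [DecidableEq V] (G : MGraph V) (v : V) (T : Finset V)

theorem matT_delete :
    (G.delete v).matT (T.subtype (· ≠ v)) = (G.matT T).submatrix Subtype.val Subtype.val := by
  ext x y
  simp only [matT, delete, Matrix.of_apply, Matrix.submatrix_apply, Finset.mem_subtype]
  congr 1
  exact propext Subtype.ext_iff

/-- The `r`-flip of the neighbours' marks is what toggles their diagonal entries. -/
theorem matT_mlc_delete :
    ((G.mlc v).delete v).matT (T.subtype (· ≠ v)) = (G.matT T).schurComplementAt v := by
  ext ⟨x, hx⟩ ⟨y, hy⟩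
  have hxv : G.adj x v = G.adj v x := G.adj_symm x v
  by_cases h : x = y
  · subst h
    cases hadj : G.adj v x
    · simp [matT, delete, mlc, Matrix.schurComplementAt, hx, hadj, hxv]
      rfl
    · by_cases hm : x ∈ T <;> cases hr : (G.mark x).hasR <;> cases hl : G.loop x <;>
        simp [matT, delete, mlc, Matrix.schurComplementAt, hx, hadj, hxv, hm, hr, hl,
          Ne.symm hx, Mark.hasR_flipN, (by decide : (1 : ZMod 2) + 1 = 0)]
  · have hne : (⟨x, hx⟩ : {x // x ≠ v}) ≠ ⟨y, hy⟩ := by simpa using h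
    cases hax : G.adj v x <;> cases hay : G.adj v y <;> cases hxy : G.adj x y <;>
      simp [matT, delete, mlc, Matrix.schurComplementAt, hx, Ne.symm hy, h, hne, hax, hay,
        hxy, hxv]

theorem keep_delete (x : {x // x ≠ v}) :
    (G.delete v).keep (T.subtype (· ≠ v)) x = G.keep T x := by
  simp only [keep, matT_delete, Matrix.submatrix_apply]
  rfl

theorem keep_mlc_delete (x : {x // x ≠ v}) :
    ((G.mlc v).delete v).keep (T.subtype (· ≠ v)) x = G.keep T x := by
  obtain ⟨x, hx⟩ := x
  have hxv : G.matT T x v = if G.adj v x = true then 1 else 0 := by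
    simp [matT, hx, G.adj_symm x v]
  have hvx : G.matT T v x = if G.adj v x = true then 1 else 0 := by
    simp [matT, Ne.symm hx]
  simp only [keep, matT_mlc_delete, Matrix.schurComplementAt, Matrix.of_apply, hxv, hvx]
  simp only [delete, mlc, hx, if_false]
  cases G.adj v x
  · simp
  -- `flipN` swaps `c ↔ ur` and `u ↔ cr` while the diagonal entry toggles.
  · simp only [if_true, mul_one]
    generalize G.matT T x x = d
    cases G.mark x <;> revert d <;> decide

theorem keep_iff_of_isC {x : V} (hC : (G.mark x).isC = true) :
    G.keep T x = true ↔ G.matT T x x = 1 := by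
  have hU : (G.mark x).isU = false := by revert hC; cases G.mark x <;> decide
  simp only [keep, hC, hU, Bool.true_and, Bool.false_and, Bool.or_false, Bool.not_eq_true',
    decide_eq_false_iff_not]
  generalize G.matT T x x = d
  revert d
  decide

theorem matT_self_eq_one_iff (x : V) :
    G.matT T x x = 1 ↔ (x ∈ T ↔ G.loop x = (G.mark x).hasR) := by
  simp only [matT, Matrix.of_apply, if_true]
  by_cases hx : x ∈ T <;> cases G.loop x <;> cases (G.mark x).hasR <;> simp [hx]

end

variable {V : Type} [DecidableEq V] [Fintype V] (G : MGraph V) (v : V) (T : Finset V)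

theorem nullity_subMat_delete (hk : G.keep T v = false) :
    nullity (G.subMat T) = nullity ((G.delete v).subMat (T.subtype (· ≠ v))) := by
  symm
  let e : {y : {x // x ≠ v} // (G.delete v).keep (T.subtype (· ≠ v)) y = true} ≃
      {x // G.keep T x = true} :=
    { toFun y := ⟨y, by rw [← keep_delete]; exact y.2⟩
      invFun x := ⟨⟨x, fun h => by simpa [h, hk] using x.2⟩, by rw [keep_delete]; exact x.2⟩
      left_inv _ := rfl
      right_inv _ := rfl }
  exact nullity_eq_of_equiv e fun a b => by
    rw [subMat, Matrix.submatrix_apply, matT_delete]; rfl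

theorem nullity_subMat_mlc_delete (hk : G.keep T v = true) (hd : G.matT T v v = 1) :
    nullity (G.subMat T) = nullity (((G.mlc v).delete v).subMat (T.subtype (· ≠ v))) := by
  rw [← nullity_schurComplementAt (M := G.subMat T) (v := ⟨v, hk⟩) hd]
  symm
  let e : {y : {x // x ≠ v} // ((G.mlc v).delete v).keep (T.subtype (· ≠ v)) y = true} ≃
      {x : {x // G.keep T x = true} // x ≠ ⟨v, hk⟩} :=
    { toFun y := ⟨⟨y, by rw [← keep_mlc_delete]; exact y.2⟩, fun h => y.1.2 congr($h.1)⟩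
      invFun x := ⟨⟨x, fun h => x.2 (Subtype.ext h)⟩, by rw [keep_mlc_delete]; exact x.1.2⟩
      left_inv _ := rfl
      right_inv _ := rfl }
  exact nullity_eq_of_equiv e fun a b => by
    rw [subMat, Matrix.submatrix_apply, matT_mlc_delete]; rfl

theorem nullity_subMat_of_isC (hC : (G.mark v).isC = true) :
    nullity (G.subMat T) = if G.matT T v v = 1
      then nullity (((G.mlc v).delete v).subMat (T.subtype (· ≠ v)))
      else nullity ((G.delete v).subMat (T.subtype (· ≠ v))) := by
  split_ifs with hd
  · exact G.nullity_subMat_mlc_delete v T ((G.keep_iff_of_isC T hC).2 hd) hd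
  · exact G.nullity_subMat_delete v T (by simpa using mt (G.keep_iff_of_isC T hC).1 hd)

theorem bracket_eq_of_nullity {R : Type*} [CommRing R] (A B d : R)
    (H₀ H₁ : MGraph {x // x ≠ v})
    (hH₀ : H₀.freeLoops = G.freeLoops) (hH₁ : H₁.freeLoops = G.freeLoops)
    (h₀ : ∀ T, v ∉ T → nullity (G.subMat T) = nullity (H₀.subMat (T.subtype (· ≠ v))))
    (h₁ : ∀ T, v ∈ T → nullity (G.subMat T) = nullity (H₁.subMat (T.subtype (· ≠ v)))) :
    G.bracket A B d = A * H₀.bracket A B d + B * H₁.bracket A B d := by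
  have hcard : Fintype.card {x // x ≠ v} = Fintype.card V - 1 := by simp
  have hcard_subtype :
      ∀ T : Finset V, (T.subtype (· ≠ v)).card = T.card - if v ∈ T then 1 else 0 := by
    intro T
    rw [Finset.card_subtype, Finset.filter_ne']
    split_ifs with h
    · exact Finset.card_erase_of_mem h
    · rw [Finset.erase_eq_of_notMem h, Nat.sub_zero]
  have sum_split : ∑ T : Finset V,
      A ^ (Fintype.card V - T.card) * B ^ T.card * d ^ nullity (G.subMat T) =
      A * ∑ T' : Finset {x // x ≠ v},
        A ^ (Fintype.card {x // x ≠ v} - T'.card) * B ^ T'.card * d ^ nullity (H₀.subMat T') +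
      B * ∑ T' : Finset {x // x ≠ v},
        A ^ (Fintype.card {x // x ≠ v} - T'.card) * B ^ T'.card * d ^ nullity (H₁.subMat T') := by
    rw [← Finset.sum_filter_add_sum_filter_not Finset.univ (v ∈ ·), add_comm, Finset.mul_sum,
      Finset.mul_sum, Finset.sum_filter_notMem_eq_sum_subtype_ne v fun T hv => ?_,
      Finset.sum_filter_mem_eq_sum_subtype_ne v fun T hv => ?_]
    · obtain ⟨k, hk⟩ := Nat.exists_eq_add_one_of_ne_zero (Finset.card_pos.2 ⟨v, hv⟩).ne'
      rw [h₁ T hv, hcard_subtype T, if_pos hv, hcard, hk, Nat.add_sub_cancel,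
        show Fintype.card V - 1 - k = Fintype.card V - (k + 1) by omega, pow_succ]
      ring
    · have hlt := Finset.card_lt_univ_of_notMem hv
      rw [h₀ T hv, hcard_subtype T, if_neg hv, Nat.sub_zero, hcard,
        show Fintype.card V - T.card = Fintype.card V - 1 - T.card + 1 by omega, pow_succ]
      ring
  unfold bracket
  rw [hH₀, hH₁, sum_split]
  ring

variable {R : Type*} [CommRing R] (A B d : R) {G v}

theorem bracket_eq_of_isC_of_loop_eq (hC : (G.mark v).isC = true)
    (hL : G.loop v = (G.mark v).hasR) :
    G.bracket A B d =
      A * (G.delete v).bracket A B d + B * ((G.mlc v).delete v).bracket A B d :=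
  G.bracket_eq_of_nullity v A B d _ _ rfl rfl
    (fun T hT => by
      rw [G.nullity_subMat_of_isC v T hC, if_neg (by simp [matT_self_eq_one_iff, hT, hL])])
    (fun T hT => by
      rw [G.nullity_subMat_of_isC v T hC, if_pos (by simp [matT_self_eq_one_iff, hT, hL])])

theorem bracket_eq_of_isC_of_loop_ne (hC : (G.mark v).isC = true)
    (hL : G.loop v ≠ (G.mark v).hasR) :
    G.bracket A B d =
      B * (G.delete v).bracket A B d + A * ((G.mlc v).delete v).bracket A B d := by
  rw [add_comm]
  exact G.bracket_eq_of_nullity v A B d _ _ rfl rfl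
    (fun T hT => by
      rw [G.nullity_subMat_of_isC v T hC, if_pos (by simp [matT_self_eq_one_iff, hT, hL])])
    (fun T hT => by
      rw [G.nullity_subMat_of_isC v T hC, if_neg (by simp [matT_self_eq_one_iff, hT, hL])])

end MGraph

/-- if `v` is unlooped and marked `c`, or looped and marked
`cr`, then `[G] = A[G − v] + B[G_cru^v − v]`; if instead `v` is looped
and marked `c`, or unlooped and marked `cr`, then
`[G] = B[G − v] + A[G_cru^v − v]`. -/
theorem bracket_c_recursion {V : Type} [DecidableEq V] [Fintype V]
    (G : MGraph V) (v : V) {R : Type*} [CommRing R] (A B d : R) :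
    (((G.loop v = false ∧ G.mark v = Mark.c) ∨ (G.loop v = true ∧ G.mark v = Mark.cr)) →
      G.bracket A B d =
        A * (G.delete v).bracket A B d + B * ((G.mlc v).delete v).bracket A B d) ∧
    (((G.loop v = true ∧ G.mark v = Mark.c) ∨ (G.loop v = false ∧ G.mark v = Mark.cr)) →
      G.bracket A B d =
        B * (G.delete v).bracket A B d + A * ((G.mlc v).delete v).bracket A B d) := by
  constructor
  · rintro (⟨hl, hm⟩ | ⟨hl, hm⟩) <;>
      exact MGraph.bracket_eq_of_isC_of_loop_eq A B d (by simp [hm, Mark.isC])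
        (by simp [hl, hm, Mark.hasR])
  · rintro (⟨hl, hm⟩ | ⟨hl, hm⟩) <;>
      exact MGraph.bracket_eq_of_isC_of_loop_ne A B d (by simp [hm, Mark.isC])
        (by simp [hl, hm, Mark.hasR])
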